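/- arXiv:2512.22083 — 2 statements merged into one kernel-verified Lean document; each statement's English description precedes it below -/
import Mathlib

section
/- Let m > 432 be an integer, let d, d' ∈ D = {3, 6, 9, 12, 15, 18, 24, 27, 30, 45, 54, 60, 72}, and let i, j ∈ {0, 1, 2}. If d·(m+i)·(m+i+1) = d'·(m+j)·(m+j+1), then d = d' and i = j. -/
lemma D_ratio (d d' : ℕ)
    (hd : d ∈ ({3, 6, 9, 12, 15, 18, 24, 27, 30, 45, 54, 60, 72} : Finset ℕ))
    (hd' : d' ∈ ({3, 6, 9, 12, 15, 18, 24, 27, 30, 45, 54, 60, 72} : Finset ℕ))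
    (h : d < d') : 10 * d ≤ 9 * d' := by
  fin_cases hd <;> fin_cases hd' <;> omega

lemma contra_case (m : ℕ) (hm : 432 < m) (d d' i j : ℕ)
    (hd : d ∈ ({3, 6, 9, 12, 15, 18, 24, 27, 30, 45, 54, 60, 72} : Finset ℕ))
    (hd' : d' ∈ ({3, 6, 9, 12, 15, 18, 24, 27, 30, 45, 54, 60, 72} : Finset ℕ))
    (hi : i ∈ ({0, 1, 2} : Finset ℕ)) (hj : j ∈ ({0, 1, 2} : Finset ℕ))
    (heq : d * (m + i) * (m + i + 1) = d' * (m + j) * (m + j + 1))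
    (hlt : d < d') : False := by
  have hi2 : i ≤ 2 := by fin_cases hi <;> omega
  have hd3 : 3 ≤ d' := by fin_cases hd' <;> omega
  have hr : 10 * d ≤ 9 * d' := D_ratio d d' hd hd' hlt
  have L1 : d * (m + i) * (m + i + 1) ≤ d * (m + 2) * (m + 3) := by
    apply Nat.mul_le_mul
    · exact Nat.mul_le_mul_left d (by omega)
    · omega
  have R1 : d' * m * (m + 1) ≤ d' * (m + j) * (m + j + 1) := by
    apply Nat.mul_le_mul
    · exact Nat.mul_le_mul_left d' (by omega)
    · omega
  have h2 : d' * m * (m + 1) ≤ d * (m + 2) * (m + 3) := by omega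
  have h3 : 10 * (d' * m * (m + 1)) ≤ 9 * (d' * ((m + 2) * (m + 3))) := by
    calc 10 * (d' * m * (m + 1)) ≤ 10 * (d * (m + 2) * (m + 3)) := by
          exact Nat.mul_le_mul_left 10 h2
      _ = (10 * d) * ((m + 2) * (m + 3)) := by ring
      _ ≤ (9 * d') * ((m + 2) * (m + 3)) := Nat.mul_le_mul_right _ hr
      _ = 9 * (d' * ((m + 2) * (m + 3))) := by ring
  have h4 : d' * (10 * (m * (m + 1))) ≤ d' * (9 * ((m + 2) * (m + 3))) := by
    calc d' * (10 * (m * (m + 1))) = 10 * (d' * m * (m + 1)) := by ring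
      _ ≤ 9 * (d' * ((m + 2) * (m + 3))) := h3
      _ = d' * (9 * ((m + 2) * (m + 3))) := by ring
  have h5 : 10 * (m * (m + 1)) ≤ 9 * ((m + 2) * (m + 3)) :=
    Nat.le_of_mul_le_mul_left h4 (by omega)
  nlinarith

theorem denominators_distinct (m : ℕ) (hm : 432 < m) (d d' i j : ℕ)
    (hd : d ∈ ({3, 6, 9, 12, 15, 18, 24, 27, 30, 45, 54, 60, 72} : Finset ℕ))
    (hd' : d' ∈ ({3, 6, 9, 12, 15, 18, 24, 27, 30, 45, 54, 60, 72} : Finset ℕ))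
    (hi : i ∈ ({0, 1, 2} : Finset ℕ)) (hj : j ∈ ({0, 1, 2} : Finset ℕ))
    (heq : d * (m + i) * (m + i + 1) = d' * (m + j) * (m + j + 1)) :
    d = d' ∧ i = j := by
  have hdd : d = d' := by
    rcases lt_trichotomy d d' with h | h | h
    · exact absurd (contra_case m hm d d' i j hd hd' hi hj heq h) (by simp)
    · exact h
    · exact absurd (contra_case m hm d' d j i hd' hd hj hi heq.symm h) (by simp)
  subst hdd
  refine ⟨rfl, ?_⟩
  have hdpos : 0 < d := by fin_cases hd <;> omega
  have h1 : (m + i) * (m + i + 1) = (m + j) * (m + j + 1) := by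
    have : d * ((m + i) * (m + i + 1)) = d * ((m + j) * (m + j + 1)) := by
      calc d * ((m + i) * (m + i + 1)) = d * (m + i) * (m + i + 1) := by ring
        _ = d * (m + j) * (m + j + 1) := heq
        _ = d * ((m + j) * (m + j + 1)) := by ring
    exact Nat.eq_of_mul_eq_mul_left hdpos this
  rcases lt_trichotomy i j with h | h | h
  · exfalso
    have : (m + i) * (m + i + 1) < (m + j) * (m + j + 1) :=
      Nat.mul_lt_mul_of_lt_of_le (by omega) (by omega) (by omega)
    omega
  · exact h
  · exfalso
    have : (m + j) * (m + j + 1) < (m + i) * (m + i + 1) :=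
      Nat.mul_lt_mul_of_lt_of_le (by omega) (by omega) (by omega)
    omega
end

section
/- Let S_k be the set of strictly increasing k-tuples of positive integers whose reciprocals sum to 1 and D_k the set of their coordinates. Then for all k ≥ 2, D_k ⊆ D_{k+1}. -/
open Finset



lemma den_one_div_dvd (x : ℕ) : (((1:ℚ)/x)).den ∣ x := by
  have h := Rat.den_dvd (1:ℤ) (x:ℤ)
  rw [Rat.divInt_eq_div] at h
  have : (((1:ℤ):ℚ) / ((x:ℤ):ℚ)) = (1:ℚ)/x := by push_cast; ring
  rw [this] at h
  exact_mod_cast h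

lemma den_sum_dvd (S : Finset ℕ) : (∑ x ∈ S, (1:ℚ)/x).den ∣ ∏ x ∈ S, x := by
  classical
  induction S using Finset.induction_on with
  | empty => simp
  | @insert a s hx ih =>
    rw [Finset.sum_insert hx, Finset.prod_insert hx]
    exact (Rat.add_den_dvd _ _).trans (mul_dvd_mul (den_one_div_dvd a) ih)

lemma prime_not_dvd_den {p : ℕ} (hp : p.Prime) (T : Finset ℕ)
    (h : ∀ x ∈ T, ¬ p ∣ x) : ¬ p ∣ (∑ x ∈ T, (1:ℚ)/x).den := by
  intro hd
  obtain ⟨x, hx, hpx⟩ := hp.prime.exists_mem_finset_dvd (hd.trans (den_sum_dvd T))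
  exact h x hx hpx

lemma tuple_of_finset {j m : ℕ} (S : Finset ℕ) (hcard : S.card = j)
    (h1 : ∀ x ∈ S, 1 ≤ x) (hsum : ∑ x ∈ S, (1:ℚ)/x = 1) (hm : m ∈ S) :
    ∃ n : Fin j → ℕ, (∀ i, 1 ≤ n i) ∧ StrictMono n ∧
      (∑ i, (1 : ℚ) / n i = 1) ∧ ∃ i, n i = m := by
  classical
  let e := S.orderIsoOfFin hcard
  refine ⟨fun i => (e i : ℕ), fun i => h1 _ (e i).2, ?_, ?_, ?_⟩
  · intro i j hij
    exact_mod_cast e.strictMono hij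
  · have h : ∑ i : Fin j, (1:ℚ)/((e i : ℕ):ℚ) = ∑ x ∈ S, (1:ℚ)/(x:ℚ) := by
      rw [← Finset.sum_attach S (fun x : ℕ => (1:ℚ)/(x:ℚ))]
      exact Fintype.sum_equiv e.toEquiv _ _ (fun i => rfl)
    rw [show (∑ i : Fin j, (1:ℚ)/(((fun i => (e i : ℕ)) i : ℕ):ℚ)) = ∑ i : Fin j, (1:ℚ)/((e i : ℕ):ℚ) from rfl, h, hsum]
  · exact ⟨e.symm ⟨m, hm⟩, by simp⟩


lemma build_succ {k : ℕ} (S : Finset ℕ) (q X Y m : ℕ)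
    (hcard : S.card = k) (h1 : ∀ x ∈ S, 1 ≤ x)
    (hsum : ∑ x ∈ S, (1:ℚ)/x = 1)
    (hq : q ∈ S)
    (hXmem : X ∉ S.erase q) (hYmem : Y ∉ S.erase q) (hXY : X ≠ Y)
    (hX1 : 1 ≤ X) (hY1 : 1 ≤ Y)
    (hid : (1:ℚ)/X + 1/Y = 1/q)
    (hm : m ∈ S.erase q ∨ m = X ∨ m = Y) :
    ∃ n : Fin (k+1) → ℕ, (∀ i, 1 ≤ n i) ∧ StrictMono n ∧
      (∑ i, (1 : ℚ) / n i = 1) ∧ ∃ i, n i = m := by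
  classical
  have hk1 : 1 ≤ k := hcard ▸ Finset.card_pos.mpr ⟨q, hq⟩
  have hXmem' : X ∉ insert Y (S.erase q) := by
    simp only [Finset.mem_insert]; tauto
  apply tuple_of_finset (insert X (insert Y (S.erase q)))
  · rw [Finset.card_insert_of_notMem hXmem', Finset.card_insert_of_notMem hYmem,
      Finset.card_erase_of_mem hq, hcard]
    omega
  · intro x hx
    simp only [Finset.mem_insert] at hx
    rcases hx with rfl | rfl | hx
    · exact hX1
    · exact hY1
    · exact h1 x (Finset.mem_of_mem_erase hx)
  · rw [Finset.sum_insert hXmem', Finset.sum_insert hYmem,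
      Finset.sum_erase_eq_sub hq, hsum]
    rw [← add_assoc, hid]
    ring
  · simp only [Finset.mem_insert]; tauto


lemma split_id (q a b : ℕ) (hq : 2 ≤ q) (ha : 1 ≤ a) (hb : 1 ≤ b) (hab : a * b = q) :
    (1:ℚ)/((q+a:ℕ):ℚ) + 1/((b*(q+a):ℕ):ℚ) = 1/(q:ℚ) := by
  have hqQ : (0:ℚ) < q := by exact_mod_cast (by omega : 0 < q)
  have haQ : (0:ℚ) < a := by exact_mod_cast ha
  have hbQ : (0:ℚ) < b := by exact_mod_cast hb
  have habQ : (a:ℚ) * b = q := by exact_mod_cast hab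
  push_cast
  have h1 : ((q:ℚ)+a) ≠ 0 := by positivity
  have h2 : ((b:ℚ)*((q:ℚ)+a)) ≠ 0 := by positivity
  field_simp
  ring_nf
  nlinarith [habQ]

lemma exists_split {q N : ℕ} (hq2 : 2 ≤ q)
    (hbad : (q + 1 = N ∨ q * (q+1) = N) → ¬ q.Prime) :
    ∃ X Y : ℕ, q < X ∧ X < Y ∧ X ≠ N ∧ Y ≠ N ∧ (1:ℚ)/X + 1/Y = 1/q := by
  by_cases hcol : q + 1 = N ∨ q * (q+1) = N
  · -- standard split collides; q is composite, use divisor split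
    have hnp : ¬ q.Prime := hbad hcol
    set a := q.minFac with ha
    have haq : a ∣ q := Nat.minFac_dvd q
    have ha2 : 2 ≤ a := (Nat.minFac_prime (by omega : q ≠ 1)).two_le
    have haneq : a ≠ q := fun h => hnp ((Nat.prime_def_minFac).mpr ⟨hq2, h⟩)
    obtain ⟨b, hab⟩ := haq
    have hb2 : 2 ≤ b := by
      rcases Nat.lt_or_ge b 2 with h | h
      · interval_cases b
        · omega
        · simp at hab; omega
      · exact h
    have haleq : a ≤ q := Nat.le_of_dvd (by omega) ⟨b, hab⟩
    have hbltq : b < q := by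
      have : 2*b ≤ a*b := Nat.mul_le_mul_right b ha2
      omega
    have h2q : 2*q ≤ q*q := Nat.mul_le_mul_right q hq2
    have hqq : q*(q+1) = q*q + q := by ring
    refine ⟨q + a, b * (q + a), by omega, ?_, ?_, ?_, ?_⟩
    · have : 1*(q+a) < b*(q+a) := Nat.mul_lt_mul_of_lt_of_le (by omega) (le_refl _) (by omega)
      omega
    · rcases hcol with h | h
      · omega
      · omega
    · rcases hcol with h | h
      · have : 2*(q+a) ≤ b*(q+a) := Nat.mul_le_mul_right _ hb2
        omega
      · have hy : b*(q+a) = b*q + q := by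
          rw [Nat.mul_add, hab]; ring
        have : b*q < q*q := Nat.mul_lt_mul_of_lt_of_le hbltq (le_refl _) (by omega)
        omega
    · exact split_id q a b hq2 (by omega) (by omega) hab.symm
  · push_neg at hcol
    refine ⟨q + 1, q * (q + 1), by omega, ?_, hcol.1, hcol.2, ?_⟩
    · have : 1*(q+1) < q*(q+1) := Nat.mul_lt_mul_of_lt_of_le (by omega) (le_refl _) (by omega)
      omega
    · exact split_id q 1 q hq2 (le_refl 1) (by omega) (by ring)


theorem Dk_subset_Dk_succ (k : ℕ) (hk : 2 ≤ k) :
    {m : ℕ | ∃ n : Fin k → ℕ, (∀ i, 1 ≤ n i) ∧ StrictMono n ∧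
        (∑ i, (1 : ℚ) / n i = 1) ∧ ∃ i, n i = m} ⊆
      {m : ℕ | ∃ n : Fin (k + 1) → ℕ, (∀ i, 1 ≤ n i) ∧ StrictMono n ∧
        (∑ i, (1 : ℚ) / n i = 1) ∧ ∃ i, n i = m} := by
  rintro m ⟨n, hn1, hmono, hsum, i₀, hi₀⟩
  classical
  simp only [Set.mem_setOf_eq]
  set S : Finset ℕ := Finset.image n Finset.univ with hSdef
  have hinj : Function.Injective n := hmono.injective
  have hcard : S.card = k := by
    rw [hSdef, Finset.card_image_of_injective _ hinj, Finset.card_univ, Fintype.card_fin]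
  have hmem : ∀ x, x ∈ S ↔ ∃ i, n i = x := by
    intro x; simp [hSdef]
  have hSsum : ∑ x ∈ S, (1:ℚ)/x = 1 := by
    rw [hSdef, Finset.sum_image (fun a _ b _ h => hinj h)]
    exact hsum
  have h1 : ∀ x ∈ S, 1 ≤ x := by
    intro x hx; obtain ⟨i, rfl⟩ := (hmem x).1 hx; exact hn1 i
  have hmS : m ∈ S := (hmem m).2 ⟨i₀, hi₀⟩
  have hSne : S.Nonempty := ⟨m, hmS⟩
  have h2 : ∀ x ∈ S, 2 ≤ x := by
    intro x hx
    rcases Nat.lt_or_ge x 2 with h | h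
    · exfalso
      have hx1 : x = 1 := by have := h1 x hx; omega
      subst hx1
      have hb : ∑ y ∈ S.erase 1, (1:ℚ)/y = 0 := by
        have h := Finset.sum_erase_eq_sub (f := fun y : ℕ => (1:ℚ)/(y:ℚ)) hx
        rw [hSsum] at h
        simpa using h
      have hne : (S.erase 1).Nonempty := by
        rw [← Finset.card_pos, Finset.card_erase_of_mem hx, hcard]; omega
      have hpos : 0 < ∑ y ∈ S.erase 1, (1:ℚ)/y := by
        apply Finset.sum_pos
        · intro y hy
          have h1y : 1 ≤ y := h1 y (Finset.mem_of_mem_erase hy)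
          have hy0 : (0:ℚ) < y := by exact_mod_cast (by omega : 0 < y)
          positivity
        · exact hne
      rw [hb] at hpos; exact lt_irrefl _ hpos
    · exact h
  set N := S.max' hSne with hNdef
  have hNS : N ∈ S := S.max'_mem hSne
  have hle : ∀ x ∈ S, x ≤ N := fun x hx => S.le_max' x hx
  by_cases hmN : m = N
  · -- m is the maximum
    subst hmN
    have hS0ne : (S.erase N).Nonempty := by
      rw [← Finset.card_pos, Finset.card_erase_of_mem hNS, hcard]; omega
    set q := (S.erase N).max' hS0ne with hqdef
    have hqE : q ∈ S.erase N := Finset.max'_mem _ _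
    have hqS : q ∈ S := Finset.mem_of_mem_erase hqE
    have hqneN : q ≠ N := Finset.ne_of_mem_erase hqE
    have hq2 : 2 ≤ q := h2 q hqS
    have hqltN : q < N := lt_of_le_of_ne (hle q hqS) hqneN
    have hlq : ∀ x ∈ S, x ≠ N → x ≤ q := fun x hx hne =>
      Finset.le_max' _ x (Finset.mem_erase.mpr ⟨hne, hx⟩)
    have hbad : (q + 1 = N ∨ q * (q+1) = N) → ¬ q.Prime := by
      rintro hcol hp
      have hq0 : (q:ℚ) ≠ 0 := by
        exact_mod_cast (by omega : q ≠ 0)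
      rcases hcol with hN1 | hN2'
      · -- N = q + 1
        set T := S.erase q with hT
        set r := ∑ x ∈ T, (1:ℚ)/x with hr
        have hrv : r = 1 - 1/q := by
          rw [hr, hT, Finset.sum_erase_eq_sub hqS, hSsum]
        have hTd : ∀ x ∈ T, ¬ q ∣ x := by
          intro x hx hdvd
          have hxS : x ∈ S := Finset.mem_of_mem_erase hx
          have hxq : x ≠ q := (Finset.mem_erase.mp hx).1
          have hx2 : 2 ≤ x := h2 x hxS
          by_cases hxN : x = N
          · rw [hxN, ← hN1] at hdvd
            have hdd : q ∣ 1 := (Nat.dvd_add_right (dvd_refl q)).mp hdvd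
            have := Nat.le_of_dvd one_pos hdd
            omega
          · have := hlq x hxS hxN
            have := Nat.le_of_dvd (by omega) hdvd
            omega
        have hkey : (r.num : ℚ) * q = ((q:ℚ) - 1) * r.den := by
          have h1' : r * (q:ℚ) = (q:ℚ) - 1 := by rw [hrv]; field_simp
          calc (r.num : ℚ) * q = (r * r.den) * q := by rw [Rat.mul_den_eq_num]
            _ = (r * q) * r.den := by ring
            _ = ((q:ℚ) - 1) * r.den := by rw [h1']
        have hkeyZ : r.num * (q:ℤ) = ((q:ℤ) - 1) * (r.den:ℤ) := by exact_mod_cast hkey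
        have hdvd : (q:ℤ) ∣ ((q:ℤ) - 1) * (r.den:ℤ) := ⟨r.num, by rw [← hkeyZ]; ring⟩
        have hqZ : Prime (q:ℤ) := Nat.prime_iff_prime_int.mp hp
        rcases hqZ.dvd_mul.mp hdvd with h | h
        · have h1'' : (q:ℤ) ∣ 1 := by
            have := dvd_sub (dvd_refl (q:ℤ)) h
            simpa using this
          have := Int.le_of_dvd one_pos h1''
          omega
        · have : q ∣ r.den := by exact_mod_cast h
          exact prime_not_dvd_den hp T hTd this
      · -- N = q * (q+1)
        set T := (S.erase N).erase q with hT
        set r := ∑ x ∈ T, (1:ℚ)/x with hr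
        have hrv : r = 1 - 1/N - 1/q := by
          rw [hr, hT, Finset.sum_erase_eq_sub hqE, Finset.sum_erase_eq_sub hNS, hSsum]
        have hTlt : ∀ x ∈ T, x < q := by
          intro x hx
          have hxq : x ≠ q := (Finset.mem_erase.mp hx).1
          have hxE : x ∈ S.erase N := Finset.mem_of_mem_erase hx
          have hxS : x ∈ S := Finset.mem_of_mem_erase hxE
          have := hlq x hxS (Finset.ne_of_mem_erase hxE)
          omega
        by_cases hq2' : q = 2
        · have hTe : T = ∅ := by
            apply Finset.eq_empty_of_forall_notMem
            intro x hx
            have h1x := hTlt x hx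
            have h2x : 2 ≤ x := h2 x (Finset.mem_of_mem_erase (Finset.mem_of_mem_erase hx))
            omega
          have hr0 : r = 0 := by rw [hr, hTe]; simp
          rw [hr0] at hrv
          have hN6 : N = 6 := by rw [hq2'] at hN2'; omega
          rw [hN6, hq2'] at hrv
          norm_num at hrv
        · have hTd : ∀ x ∈ T, ¬ q ∣ x := by
            intro x hx hdvd
            have := hTlt x hx
            have hx2 : 2 ≤ x := h2 x (Finset.mem_of_mem_erase (Finset.mem_of_mem_erase hx))
            have := Nat.le_of_dvd (by omega) hdvd
            omega
          have hN0 : (N:ℚ) ≠ 0 := by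
            exact_mod_cast (by omega : N ≠ 0)
          have hNQ : (N:ℚ) = q*(q+1) := by exact_mod_cast hN2'.symm
          have hkey : (r.num:ℚ) * ((q:ℚ)*(q+1)) = ((q:ℚ)*q - 2) * r.den := by
            have h1' : r * ((q:ℚ)*((q:ℚ)+1)) = (q:ℚ)*q - 2 := by
              rw [hrv, hNQ]; field_simp; ring
            calc (r.num:ℚ) * ((q:ℚ)*(q+1)) = (r * r.den) * ((q:ℚ)*(q+1)) := by
                  rw [Rat.mul_den_eq_num]
              _ = (r * ((q:ℚ)*((q:ℚ)+1))) * r.den := by ring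
              _ = ((q:ℚ)*q - 2) * r.den := by rw [h1']
          have hkeyZ : r.num * ((q:ℤ)*((q:ℤ)+1)) = ((q:ℤ)*q - 2) * (r.den:ℤ) := by
            exact_mod_cast hkey
          have hdvd : (q:ℤ) ∣ ((q:ℤ)*q - 2) * (r.den:ℤ) :=
            ⟨r.num*((q:ℤ)+1), by rw [← hkeyZ]; ring⟩
          have hqZ : Prime (q:ℤ) := Nat.prime_iff_prime_int.mp hp
          rcases hqZ.dvd_mul.mp hdvd with h | h
          · have h2'' : (q:ℤ) ∣ 2 := by
              have := dvd_sub (⟨(q:ℤ), rfl⟩ : (q:ℤ) ∣ (q:ℤ)*q) h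
              simpa using this
            have := Int.le_of_dvd (by norm_num) h2''
            omega
          · have : q ∣ r.den := by exact_mod_cast h
            exact prime_not_dvd_den hp T hTd this
    obtain ⟨X, Y, hqX, hXY, hXN, hYN, hid⟩ := exists_split hq2 hbad
    have hmemX : X ∉ S.erase q := by
      intro h
      have hxS := Finset.mem_of_mem_erase h
      by_cases hXN' : X = N
      · exact hXN hXN'
      · have := hlq X hxS hXN'; omega
    have hmemY : Y ∉ S.erase q := by
      intro h
      have hyS := Finset.mem_of_mem_erase h
      by_cases hYN' : Y = N
      · exact hYN hYN'
      · have := hlq Y hyS hYN'; omega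
    exact build_succ S q X Y N hcard h1 hSsum hqS hmemX hmemY (by omega) (by omega)
      (by omega) hid (Or.inl (Finset.mem_erase.mpr ⟨Ne.symm hqneN, hNS⟩))
  · -- m is not the maximum : split N
    have hN2 : 2 ≤ N := h2 N hNS
    have hNN : 2*(N+1) ≤ N*(N+1) := Nat.mul_le_mul_right _ hN2
    have hXm : N+1 ∉ S.erase N := fun h => by
      have := hle _ (Finset.mem_of_mem_erase h); omega
    have hYm : N*(N+1) ∉ S.erase N := fun h => by
      have := hle _ (Finset.mem_of_mem_erase h); omega
    have hid : (1:ℚ)/(N+1:ℕ) + 1/(N*(N+1):ℕ) = 1/(N:ℚ) :=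
      split_id N 1 N hN2 (le_refl 1) (by omega) (by ring)
    exact build_succ S N (N+1) (N*(N+1)) m hcard h1 hSsum hNS hXm hYm (by omega)
      (by omega) (by omega) (by exact_mod_cast hid)
      (Or.inl (Finset.mem_erase.mpr ⟨hmN, hmS⟩))
end
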